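/- Mean preservation of the BDF3/EP3 scheme: let η > 0, τ > 0, and let (hⁿ)_{n≥0} be a sequence of smooth 2π-periodic functions solving the BDF3/EP3 scheme with parameters η, τ. If ∫_Q h² dx = ∫_Q h¹ dx = ∫_Q h⁰ dx, then ∫_Q hⁿ dx = ∫_Q h⁰ dx for all n ≥ 0. -/

import Mathlib

open MeasureTheory

noncomputable section

/-- The domain `ℝ²` with the Euclidean norm. -/
abbrev R2 := EuclideanSpace ℝ (Fin 2)

/-- The fundamental cell `Q = [-π, π]²`. -/
def Q : Set R2 := {x | ∀ i, x i ∈ Set.Icc (-Real.pi) Real.pi}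

/-- A function on `ℝ²` is `2π`-periodic if it is invariant under translation by
`2π e` for each standard basis vector `e`. -/
def Periodic2 {E : Type*} (u : R2 → E) : Prop :=
  ∀ (x : R2) (i : Fin 2), u (x + EuclideanSpace.single i (2 * Real.pi)) = u x

/-- Partial derivative in the `i`-th coordinate direction. -/
def pd (i : Fin 2) (u : R2 → ℝ) (x : R2) : ℝ :=
  fderiv ℝ u x (EuclideanSpace.single i 1)

/-- The gradient as a plain vector in `Fin 2 → ℝ`. -/
def gradv (u : R2 → ℝ) (x : R2) : Fin 2 → ℝ := fun i => pd i u x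

/-- The Laplacian. -/
def lap (u : R2 → ℝ) (x : R2) : ℝ := ∑ i, pd i (pd i u) x

/-- The bilaplacian `Δ²u = Δ(Δu)`. -/
def bilap (u : R2 → ℝ) (x : R2) : ℝ := lap (lap u) x

/-- The divergence of a vector field. -/
def divg (F : R2 → Fin 2 → ℝ) (x : R2) : ℝ := ∑ i, pd i (fun y => F y i) x

/-- The nonlinearity `g(z) = -z/(1+|z|²)` acting on vectors. -/
def gvec (v : Fin 2 → ℝ) : Fin 2 → ℝ := fun i => -v i / (1 + ∑ k, v k ^ 2)

/-- The BDF3/EP3 scheme with parameters `η, τ`: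
`(11h^{n+1} - 18hⁿ + 9h^{n-1} - 2h^{n-2})/(6τ)
  = -η² Δ²h^{n+1} + ∇·(g(3∇hⁿ - 3∇h^{n-1} + ∇h^{n-2}))` pointwise. -/
def BDF3EP3 (η τ : ℝ) (h : ℕ → R2 → ℝ) : Prop :=
  ∀ n : ℕ, 2 ≤ n → ∀ x : R2,
    (11 * h (n + 1) x - 18 * h n x + 9 * h (n - 1) x - 2 * h (n - 2) x) / (6 * τ)
      = -η ^ 2 * bilap (h (n + 1)) x
        + divg (fun y =>
            gvec (fun i => 3 * gradv (h n) y i - 3 * gradv (h (n - 1)) y i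
              + gradv (h (n - 2)) y i)) x

/-- The squared `L²` norm over `Q`. -/
def L2sq (u : R2 → ℝ) : ℝ := ∫ x in Q, (u x) ^ 2

/-- The `L²` norm over `Q`. -/
def L2norm (u : R2 → ℝ) : ℝ := Real.sqrt (L2sq u)

/-- `‖∇u‖₂² = ∫_Q |∇u|² dx`. -/
def gradL2sq (u : R2 → ℝ) : ℝ := ∫ x in Q, ∑ i, (pd i u x) ^ 2

/-- The energy `E(u) = ∫_Q (-(1/2) log(1+|∇u|²) + (1/2) η² (Δu)²) dx`. -/
def energy (η : ℝ) (u : R2 → ℝ) : ℝ :=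
  ∫ x in Q, (-(1 / 2) * Real.log (1 + ∑ i, (pd i u x) ^ 2)
    + (1 / 2) * η ^ 2 * (lap u x) ^ 2)

/-! Integrating the scheme over `Q` kills its right-hand side: `Δ²h` and `∇·g(…)` are divergences
of smooth periodic fields, and the integral of `∂ᵢu` over `Q` vanishes for periodic `u`
(fundamental theorem of calculus along each line in direction `eᵢ`, then Fubini). Hence the means
`mⁿ = ∫_Q hⁿ` satisfy `11m^{n+1} - 18mⁿ + 9m^{n-1} - 2m^{n-2} = 0`; the coefficients sum to zero,
so equal initial means propagate. -/

open Real

theorem Periodic2.comp {E F : Type*} {u : R2 → E} (hp : Periodic2 u) (g : E → F) :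
    Periodic2 (g ∘ u) := fun x j => by
  simp only [Function.comp, hp x j]

section Calculus

variable {f : R2 → ℝ}

theorem contDiff_pd (hf : ContDiff ℝ (⊤ : ℕ∞) f) (i : Fin 2) : ContDiff ℝ (⊤ : ℕ∞) (pd i f) :=
  (hf.fderiv_right (by exact_mod_cast le_top)).clm_apply contDiff_const

theorem continuous_pd (hf : ContDiff ℝ 1 f) (i : Fin 2) : Continuous (pd i f) :=
  (hf.continuous_fderiv one_ne_zero).clm_apply continuous_const

theorem contDiff_lap (hf : ContDiff ℝ (⊤ : ℕ∞) f) : ContDiff ℝ (⊤ : ℕ∞) (lap f) :=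
  ContDiff.sum fun i _ => contDiff_pd (contDiff_pd hf i) i

theorem contDiff_gradv (hf : ContDiff ℝ (⊤ : ℕ∞) f) : ContDiff ℝ (⊤ : ℕ∞) (gradv f) :=
  contDiff_pi.2 (contDiff_pd hf)

theorem Periodic2.pd (hp : Periodic2 f) (i : Fin 2) : Periodic2 (pd i f) := by
  intro x j
  simp only [_root_.pd, ← fderiv_comp_add_right, hp _ j]

theorem Periodic2.lap (hp : Periodic2 f) : Periodic2 (lap f) := fun x j => by
  simp only [_root_.lap, ((hp.pd _).pd _) x j]

theorem Periodic2.gradv (hp : Periodic2 f) : Periodic2 (gradv f) := fun x j => by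
  ext i
  exact (hp.pd i) x j

end Calculus

theorem isCompact_Q : IsCompact Q := by
  have hQ : Q = (EuclideanSpace.equiv (Fin 2) ℝ).toHomeomorph ⁻¹'
      Set.univ.pi fun _ => Set.Icc (-π) π := by
    ext x
    simp only [Q, Set.mem_preimage, Set.mem_univ_pi]
    rfl
  rw [hQ, Homeomorph.isCompact_preimage]
  exact isCompact_univ_pi fun _ => isCompact_Icc

theorem Continuous.integrableOn_Q {E : Type*} [NormedAddCommGroup E] {u : R2 → E}
    (hu : Continuous u) : IntegrableOn u Q :=
  hu.continuousOn.integrableOn_compact isCompact_Q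

section Integration

variable {f : R2 → ℝ}

theorem integral_pd_along_period_eq_zero (hf : ContDiff ℝ 1 f) (hp : Periodic2 f) (i : Fin 2)
    (p : R2) : ∫ t in Set.Icc (-π) π, pd i f (p + t • EuclideanSpace.single i 1) = 0 := by
  set v : R2 := EuclideanSpace.single i 1
  have hderiv : ∀ t ∈ Set.uIcc (-π) π,
      HasDerivAt (fun s : ℝ => f (p + s • v)) (pd i f (p + t • v)) t := fun t _ =>
    (hf.differentiable one_ne_zero _).hasFDerivAt.comp_hasDerivAt t
      (((hasDerivAt_id t).smul_const v).const_add p |>.congr_deriv (one_smul ℝ v))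
  have hcont : Continuous fun t : ℝ => pd i f (p + t • v) := by
    have := continuous_pd hf i
    fun_prop
  have hperiod : p + π • v = p + (-π) • v + EuclideanSpace.single i (2 * π) := by
    ext j
    rcases eq_or_ne j i with rfl | hj
    · simp only [v, PiLp.add_apply, PiLp.smul_apply, PiLp.single_eq_same, smul_eq_mul]
      ring
    · simp [v, hj]
  rw [integral_Icc_eq_integral_Ioc, ← intervalIntegral.integral_of_le (by linarith [pi_pos]),
    intervalIntegral.integral_eq_sub_of_hasDerivAt hderiv (hcont.intervalIntegrable _ _),
    hperiod, hp, sub_self]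

theorem integral_pd_eq_zero (hf : ContDiff ℝ 1 f) (hp : Periodic2 f) (i : Fin 2) :
    ∫ x in Q, pd i f x = 0 := by
  set e : R2 ≃ᵐ ℝ × (Fin 1 → ℝ) := (MeasurableEquiv.toLp 2 (Fin 2 → ℝ)).symm.trans
    (MeasurableEquiv.piFinSuccAbove (fun _ => ℝ) i)
  have he : MeasurePreserving e volume (volume.prod volume) :=
    (EuclideanSpace.volume_preserving_symm_measurableEquiv_toLp _).trans
      (volume_preserving_piFinSuccAbove _ i)
  set I := Set.Icc (-π) π
  set S : Set (Fin 1 → ℝ) := Set.univ.pi fun _ => I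
  have hQ : Q = e ⁻¹' (I ×ˢ S) := by
    ext x
    simp only [Q, Set.mem_preimage, Set.mem_prod, Set.mem_univ_pi, S,
      Fin.forall_iff_succAbove i]
    rfl
  have he_symm : Continuous e.symm := by
    show Continuous fun z : ℝ × (Fin 1 → ℝ) =>
      WithLp.toLp 2 (i.insertNth (α := fun _ => ℝ) z.1 z.2)
    fun_prop
  have hline : ∀ t y, e.symm (t, y) = e.symm (0, y) + t • EuclideanSpace.single i 1 := by
    intro t y
    ext j
    refine Fin.succAboveCases i ?_ (fun k => ?_) j <;> simp [e]
  have hint : Integrable (fun z => pd i f (e.symm z))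
      ((volume.restrict I).prod (volume.restrict S)) := by
    rw [Measure.prod_restrict]
    exact ((continuous_pd hf i).comp he_symm).continuousOn.integrableOn_compact
      (isCompact_Icc.prod (isCompact_univ_pi fun _ => isCompact_Icc))
  calc ∫ x in Q, pd i f x = ∫ z in I ×ˢ S, pd i f (e.symm z) ∂(volume.prod volume) := by
        rw [hQ, ← he.setIntegral_preimage_emb e.measurableEmbedding]
        simp
    _ = ∫ y in S, ∫ t in I, pd i f (e.symm (t, y)) := by
        rw [← Measure.prod_restrict, integral_prod_symm _ hint]
    _ = 0 := by
        have hinner : ∀ y, ∫ t in I, pd i f (e.symm (t, y)) = 0 := fun y => by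
          simpa only [← hline] using integral_pd_along_period_eq_zero hf hp i (e.symm (0, y))
        simp only [hinner, integral_zero]

end Integration

theorem integral_divg_eq_zero {F : R2 → Fin 2 → ℝ} (hF : ContDiff ℝ 1 F) (hp : Periodic2 F) :
    ∫ x in Q, divg F x = 0 := by
  have hFi : ∀ i, ContDiff ℝ 1 fun y => F y i := contDiff_pi.1 hF
  simp only [divg]
  rw [integral_finsetSum _ fun i _ => (continuous_pd (hFi i) i).integrableOn_Q]
  exact Finset.sum_eq_zero fun i _ => integral_pd_eq_zero (hFi i) (hp.comp (· i)) i

theorem integral_bilap_eq_zero {f : R2 → ℝ} (hf : ContDiff ℝ (⊤ : ℕ∞) f) (hp : Periodic2 f) :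
    ∫ x in Q, bilap f x = 0 :=
  integral_divg_eq_zero ((contDiff_gradv (contDiff_lap hf)).of_le (by exact_mod_cast le_top))
    hp.lap.gradv

theorem contDiff_gvec : ContDiff ℝ (⊤ : ℕ∞) gvec :=
  contDiff_pi.2 fun i => (contDiff_apply ℝ ℝ i).neg.div
    (contDiff_const.add (ContDiff.sum fun k _ => (contDiff_apply ℝ ℝ k).pow 2))
    fun v => by positivity

theorem BDF3EP3.integral_recurrence {η τ : ℝ} {h : ℕ → R2 → ℝ} (hscheme : BDF3EP3 η τ h)
    (hτ : τ ≠ 0) (hsmooth : ∀ n, ContDiff ℝ (⊤ : ℕ∞) (h n)) (hper : ∀ n, Periodic2 (h n))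
    (n : ℕ) :
    11 * (∫ x in Q, h (n + 3) x) - 18 * (∫ x in Q, h (n + 2) x) + 9 * (∫ x in Q, h (n + 1) x)
      - 2 * (∫ x in Q, h n x) = 0 := by
  set F : R2 → Fin 2 → ℝ := fun y => gvec fun i =>
    3 * gradv (h (n + 2)) y i - 3 * gradv (h (n + 1)) y i + gradv (h n) y i
  have hstep : ∀ x, (11 * h (n + 3) x - 18 * h (n + 2) x + 9 * h (n + 1) x - 2 * h n x) / (6 * τ)
      = -η ^ 2 * bilap (h (n + 3)) x + divg F x := hscheme (n + 2) le_add_self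
  have hF : ContDiff ℝ (⊤ : ℕ∞) F := by
    have := contDiff_gradv (hsmooth (n + 2))
    have := contDiff_gradv (hsmooth (n + 1))
    have := contDiff_gradv (hsmooth n)
    exact contDiff_gvec.comp (by fun_prop)
  have hFper : Periodic2 F := fun x j => by
    simp only [F, (hper (n + 2)).gradv x j, (hper (n + 1)).gradv x j, (hper n).gradv x j]
  have hbilap : Continuous (bilap (h (n + 3))) :=
    (contDiff_lap (contDiff_lap (hsmooth (n + 3)))).continuous
  have hdivg : Continuous (divg F) :=
    continuous_finsetSum _ fun i _ =>
      continuous_pd ((contDiff_pi.1 hF i).of_le (by exact_mod_cast le_top)) i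
  have hrhs : ∫ x in Q, (-η ^ 2 * bilap (h (n + 3)) x + divg F x) = 0 := by
    rw [integral_add (Continuous.integrableOn_Q (by fun_prop)) hdivg.integrableOn_Q,
      integral_const_mul, integral_bilap_eq_zero (hsmooth _) (hper _),
      integral_divg_eq_zero (hF.of_le (by exact_mod_cast le_top)) hFper, mul_zero, add_zero]
  have hcont : ∀ m, Continuous (h m) := fun m => (hsmooth m).continuous
  rw [← integral_congr_ae (Filter.Eventually.of_forall hstep), integral_div, integral_sub,
    integral_add, integral_sub, integral_const_mul, integral_const_mul, integral_const_mul,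
    integral_const_mul] at hrhs
  · simpa [hτ] using hrhs
  all_goals exact Continuous.integrableOn_Q (by fun_prop)

theorem eq_of_bdf3_recurrence {a : ℕ → ℝ}
    (hrec : ∀ n, 11 * a (n + 3) - 18 * a (n + 2) + 9 * a (n + 1) - 2 * a n = 0)
    (h1 : a 1 = a 0) (h2 : a 2 = a 0) : ∀ n, a n = a 0
  | 0 => rfl
  | 1 => h1
  | 2 => h2
  | n + 3 => by
    have := eq_of_bdf3_recurrence hrec h1 h2 n
    have := eq_of_bdf3_recurrence hrec h1 h2 (n + 1)
    have := eq_of_bdf3_recurrence hrec h1 h2 (n + 2)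
    linarith [hrec n]

theorem bdf3ep3_mean_preservation_general (η τ : ℝ) (hτ : 0 < τ)
    (h : ℕ → R2 → ℝ) (hsmooth : ∀ n, ContDiff ℝ (⊤ : ℕ∞) (h n))
    (hper : ∀ n, Periodic2 (h n)) (hscheme : BDF3EP3 η τ h)
    (hmean2 : ∫ x in Q, h 2 x = ∫ x in Q, h 0 x)
    (hmean1 : ∫ x in Q, h 1 x = ∫ x in Q, h 0 x) :
    ∀ n : ℕ, ∫ x in Q, h n x = ∫ x in Q, h 0 x :=
  eq_of_bdf3_recurrence (hscheme.integral_recurrence hτ.ne' hsmooth hper) hmean1 hmean2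

/-- mean preservation for the BDF3/EP3 scheme. If
`∫_Q h² = ∫_Q h¹ = ∫_Q h⁰`, then `∫_Q hⁿ = ∫_Q h⁰` for all `n ≥ 0`. -/
theorem bdf3ep3_mean_preservation (η τ : ℝ) (hη : 0 < η) (hτ : 0 < τ)
    (h : ℕ → R2 → ℝ) (hsmooth : ∀ n, ContDiff ℝ (⊤ : ℕ∞) (h n))
    (hper : ∀ n, Periodic2 (h n)) (hscheme : BDF3EP3 η τ h)
    (hmean2 : ∫ x in Q, h 2 x = ∫ x in Q, h 0 x)
    (hmean1 : ∫ x in Q, h 1 x = ∫ x in Q, h 0 x) :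
    ∀ n : ℕ, ∫ x in Q, h n x = ∫ x in Q, h 0 x :=
  bdf3ep3_mean_preservation_general η τ hτ h hsmooth hper hscheme hmean2 hmean1
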